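/- Let A = x dy + dz on ℝ³ and let Sp1 = ∂_x + i∂_y, Sp2 = ∂_x − i∂_y. Although the processes ρ·Sp1 and ρ·Sp2 individually yield Q ∧ dQ = ∓ i ρ dρ ∧ dx ∧ dy (irreversible when ρ dρ ∧ dx ∧ dy ≠ 0), the real combinations V_x = (Sp1 + Sp2)/2 and V_y = −i(Sp1 − Sp2)/2 both give processes ρV_x, ρV_y with Q ∧ dQ = 0 (reversible). -/

import Mathlib

open scoped BigOperators

/-- A raw complex-valued differential `k`-form on ℝⁿ, evaluated on complexified
tangent vectors. -/
abbrev FormC (n k : ℕ) := (Fin n → ℝ) → (Fin k → (Fin n → ℂ)) → ℂ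

/-- Exterior derivative of a raw complex `k`-form (complex-linear extension in the
vector slots). -/
noncomputable def extdC {n k : ℕ} (ω : FormC n k) : FormC n (k + 1) :=
  fun x v => ∑ i : Fin (k + 1), (-1 : ℂ) ^ (i : ℕ) *
    ∑ j : Fin n, v i j *
      fderiv ℝ (fun y => ω y (i.removeNth v)) x (Pi.single j 1)

/-- Wedge product of raw complex forms. -/
noncomputable def wedgeC {n k l : ℕ} (α : FormC n k) (β : FormC n l) : FormC n (k + l) :=
  fun x v => ((1 : ℂ) / ((Nat.factorial k : ℂ) * (Nat.factorial l : ℂ))) *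
    ∑ σ : Equiv.Perm (Fin (k + l)), ((Equiv.Perm.sign σ : ℤ) : ℂ) *
      (α x (fun i => v (σ (Fin.castAdd l i))) * β x (fun j => v (σ (Fin.natAdd k j))))

/-- Interior product with a complexified vector field. -/
def iprodC {n k : ℕ} (X : (Fin n → ℝ) → (Fin n → ℂ)) (ω : FormC n (k + 1)) : FormC n k :=
  fun x v => ω x (Fin.cons (X x) v)

/-- The complexification of the Darboux 1-form `A = x dy + dz` on ℝ³. -/
noncomputable def Adarboux : FormC 3 1 := fun p v => (p 0 : ℂ) * v 0 1 + v 0 2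

/-- The heat 1-form of a (complex) process `X`, by Cartan's magic formula. -/
noncomputable def heatC (X : (Fin 3 → ℝ) → (Fin 3 → ℂ)) : FormC 3 1 :=
  iprodC X (extdC Adarboux) + extdC (iprodC X Adarboux)

noncomputable def dxC : FormC 3 1 := fun _ v => v 0 0
noncomputable def dyC : FormC 3 1 := fun _ v => v 0 1

abbrev E3 := Fin 3 → ℝ

noncomputable def rhoC (ρ : E3 → ℝ) : E3 → ℂ := fun y => ((ρ y : ℝ) : ℂ)

noncomputable def Dd (ρ : E3 → ℝ) (x : E3) (j : Fin 3) : ℂ :=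
  fderiv ℝ (rhoC ρ) x (Pi.single j 1)

noncomputable def L0 : (E3 →L[ℝ] ℂ) :=
  Complex.ofRealCLM.comp (ContinuousLinearMap.proj 0)

lemma L0_apply (u : E3) : L0 u = (u 0 : ℂ) := rfl

variable {ρ : E3 → ℝ}

lemma contDiff_rhoC (hρ : ContDiff ℝ (⊤ : ℕ∞) ρ) : ContDiff ℝ (⊤ : ℕ∞) (rhoC ρ) :=
  Complex.ofRealCLM.contDiff.comp hρ

lemma diff_rhoC (hρ : ContDiff ℝ (⊤ : ℕ∞) ρ) : Differentiable ℝ (rhoC ρ) :=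
  (contDiff_rhoC hρ).differentiable (by simp)

noncomputable def Qform (ρ : E3 → ℝ) (W : Fin 3 → ℂ) : FormC 3 1 := fun x v =>
  rhoC ρ x * W 0 * v 0 1 + ((x 0 : ℂ) * W 1 + W 2) * ∑ j, v 0 j * Dd ρ x j

-- extdC Adarboux is dx ∧ dy
lemma extdA (x : E3) (w : Fin 2 → Fin 3 → ℂ) :
    extdC Adarboux x w = w 0 0 * w 1 1 - w 1 0 * w 0 1 := by
  have key : ∀ (u : Fin 1 → Fin 3 → ℂ) (j : Fin 3),
      fderiv ℝ (fun y : E3 => Adarboux y u) x (Pi.single j 1)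
        = ((Pi.single j (1:ℝ) : E3) 0 : ℂ) * u 0 1 := by
    intro u j
    have h : HasFDerivAt (fun y : E3 => Adarboux y u) ((u 0 1) • L0) x := by
      have h0 : HasFDerivAt (fun y : E3 => ((y 0 : ℝ) : ℂ)) L0 x := L0.hasFDerivAt
      simpa [Adarboux] using (h0.mul_const (u 0 1)).add_const (u 0 2)
    rw [h.fderiv]
    simp [L0_apply, smul_eq_mul, mul_comm]
  have sum2 : ∀ (f : Fin (1+1) → ℂ), (∑ i, f i) = f 0 + f 1 := fun f => Fin.sum_univ_two f
  simp only [extdC]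
  rw [sum2, Fin.sum_univ_three, Fin.sum_univ_three]
  rw [key, key, key, key, key, key]
  have e0 : (0 : Fin (1+1)).removeNth w 0 = w 1 := rfl
  have e1 : (1 : Fin (1+1)).removeNth w 0 = w 0 := rfl
  rw [e0, e1]
  simp [Pi.single_apply]
  try ring

lemma heat_eq (hρ : ContDiff ℝ (⊤ : ℕ∞) ρ) (W : Fin 3 → ℂ) :
    heatC (fun p j => (ρ p : ℂ) * W j) = Qform ρ W := by
  funext x v
  have hadd : heatC (fun p j => (ρ p : ℂ) * W j) x v
      = iprodC (fun p j => (ρ p : ℂ) * W j) (extdC Adarboux) x v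
        + extdC (iprodC (fun p j => (ρ p : ℂ) * W j) Adarboux) x v := rfl
  rw [hadd]
  -- first term
  have t1 : iprodC (fun p j => (ρ p : ℂ) * W j) (extdC Adarboux) x v
      = (ρ x : ℂ) * W 0 * v 0 1 - v 0 0 * ((ρ x : ℂ) * W 1) := by
    rw [iprodC, extdA]
    have c0 : (Fin.cons (fun j => (ρ x : ℂ) * W j) v : Fin 2 → Fin 3 → ℂ) 0
        = fun j => (ρ x : ℂ) * W j := rfl
    have c1 : (Fin.cons (fun j => (ρ x : ℂ) * W j) v : Fin 2 → Fin 3 → ℂ) 1 = v 0 := rfl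
    rw [c0, c1]
  -- second term
  have t2 : extdC (iprodC (fun p j => (ρ p : ℂ) * W j) Adarboux) x v
      = ((x 0 : ℂ) * W 1 + W 2) * (∑ j, v 0 j * Dd ρ x j) + (ρ x : ℂ) * W 1 * v 0 0 := by
    have hfd : ∀ j : Fin 3,
        fderiv ℝ (fun y : E3 => iprodC (fun p j => (ρ p : ℂ) * W j) Adarboux y
            ((0 : Fin 1).removeNth v)) x (Pi.single j 1)
        = ((x 0 : ℂ) * W 1 + W 2) * Dd ρ x j
            + (ρ x : ℂ) * W 1 * ((Pi.single j (1:ℝ) : E3) 0 : ℂ) := by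
      intro j
      have hfun : (fun y : E3 => iprodC (fun p j => (ρ p : ℂ) * W j) Adarboux y
          ((0 : Fin 1).removeNth v)) = fun y : E3 => ((y 0 : ℝ) : ℂ) * (rhoC ρ y * W 1)
            + rhoC ρ y * W 2 := by
        funext y
        simp [iprodC, Adarboux, rhoC]
        try ring
      rw [hfun]
      have h0 : HasFDerivAt (fun y : E3 => ((y 0 : ℝ) : ℂ)) L0 x := L0.hasFDerivAt
      have hr : HasFDerivAt (rhoC ρ) (fderiv ℝ (rhoC ρ) x) x :=
        (diff_rhoC hρ x).hasFDerivAt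
      have h := (h0.fun_mul (hr.mul_const (W 1))).fun_add (hr.mul_const (W 2))
      rw [h.fderiv]
      simp [ContinuousLinearMap.add_apply, ContinuousLinearMap.smul_apply,
        ContinuousLinearMap.smulRight_apply, L0_apply, smul_eq_mul, Dd, rhoC]
      ring
    have sum1 : ∀ (f : Fin (0+1) → ℂ), (∑ i, f i) = f 0 := fun f => Fin.sum_univ_one f
    simp only [extdC]
    rw [sum1, Fin.sum_univ_three]
    rw [hfd 0, hfd 1, hfd 2, Fin.sum_univ_three]
    simp [Pi.single_apply]
    try ring
  rw [t1, t2, Qform]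
  simp only [rhoC]
  ring

lemma diff_fd (hρ : ContDiff ℝ (⊤ : ℕ∞) ρ) : Differentiable ℝ (fderiv ℝ (rhoC ρ)) :=
  ((contDiff_rhoC hρ).fderiv_right (m := 1) (by exact WithTop.coe_le_coe.mpr le_top)).differentiable (by simp)

lemma hasFDerivAt_Dd (hρ : ContDiff ℝ (⊤ : ℕ∞) ρ) (x : E3) (k : Fin 3) :
    HasFDerivAt (fun y => Dd ρ y k)
      ((ContinuousLinearMap.apply ℝ ℂ (Pi.single k 1)).comp
        (fderiv ℝ (fderiv ℝ (rhoC ρ)) x)) x := by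
  have h := (ContinuousLinearMap.apply ℝ ℂ (Pi.single k 1)).hasFDerivAt.comp x
    ((diff_fd hρ x).hasFDerivAt)
  exact h

noncomputable def Hd (ρ : E3 → ℝ) (x : E3) (k j : Fin 3) : ℂ :=
  fderiv ℝ (fun y => Dd ρ y k) x (Pi.single j 1)

lemma Hsymm (hρ : ContDiff ℝ (⊤ : ℕ∞) ρ) (x : E3) (j k : Fin 3) :
    Hd ρ x k j = Hd ρ x j k := by
  rw [Hd, Hd, (hasFDerivAt_Dd hρ x k).fderiv, (hasFDerivAt_Dd hρ x j).fderiv]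
  simp only [ContinuousLinearMap.comp_apply, ContinuousLinearMap.apply_apply]
  exact second_derivative_symmetric (f := rhoC ρ)
    (fun y => (diff_rhoC hρ y).hasFDerivAt) ((diff_fd hρ x).hasFDerivAt) _ _

noncomputable def DQform (ρ : E3 → ℝ) (W : Fin 3 → ℂ) : FormC 3 2 := fun x v =>
  W 0 * ((∑ j, v 0 j * Dd ρ x j) * v 1 1 - (∑ j, v 1 j * Dd ρ x j) * v 0 1)
  + W 1 * (v 0 0 * (∑ j, v 1 j * Dd ρ x j) - v 1 0 * (∑ j, v 0 j * Dd ρ x j))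

lemma dQ_eq (hρ : ContDiff ℝ (⊤ : ℕ∞) ρ) (W : Fin 3 → ℂ) :
    extdC (Qform ρ W) = DQform ρ W := by
  funext x v
  have hfd : ∀ (u : Fin 3 → ℂ) (j : Fin 3),
      fderiv ℝ (fun y : E3 => rhoC ρ y * W 0 * u 1
          + ((y 0 : ℂ) * W 1 + W 2) * ∑ k, u k * Dd ρ y k) x (Pi.single j 1)
      = Dd ρ x j * W 0 * u 1
        + ((Pi.single j (1:ℝ) : E3) 0 : ℂ) * W 1 * (∑ k, u k * Dd ρ x k)
        + ((x 0 : ℂ) * W 1 + W 2) * (∑ k, u k * Hd ρ x k j) := by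
    intro u j
    have hr : HasFDerivAt (rhoC ρ) (fderiv ℝ (rhoC ρ) x) x :=
      (diff_rhoC hρ x).hasFDerivAt
    have hA := (hr.mul_const (W 0)).mul_const (u 1)
    have hB : HasFDerivAt (fun y : E3 => (y 0 : ℂ) * W 1 + W 2) ((W 1) • L0) x := by
      have h0 : HasFDerivAt (fun y : E3 => ((y 0 : ℝ) : ℂ)) L0 x := L0.hasFDerivAt
      simpa using (h0.mul_const (W 1)).add_const (W 2)
    have hS : HasFDerivAt (fun y : E3 => ∑ k, u k * Dd ρ y k)
        (∑ k : Fin 3, (u k) • ((ContinuousLinearMap.apply ℝ ℂ (Pi.single k 1)).comp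
          (fderiv ℝ (fderiv ℝ (rhoC ρ)) x))) x := by
      exact HasFDerivAt.fun_sum (fun k _ => (hasFDerivAt_Dd hρ x k).const_mul (u k))
    have h := hA.fun_add (hB.fun_mul hS)
    rw [h.fderiv]
    simp only [ContinuousLinearMap.add_apply, ContinuousLinearMap.smul_apply,
      ContinuousLinearMap.coe_sum', Finset.sum_apply, ContinuousLinearMap.comp_apply,
      ContinuousLinearMap.apply_apply, smul_eq_mul, L0_apply]
    have hHd : ∀ k j : Fin 3,
        fderiv ℝ (fun y => (fderiv ℝ (rhoC ρ) y) (Pi.single k 1)) x (Pi.single j 1)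
          = (fderiv ℝ (fderiv ℝ (rhoC ρ)) x (Pi.single j 1)) (Pi.single k 1) := by
      intro k j
      rw [show (fun y => (fderiv ℝ (rhoC ρ) y) (Pi.single k 1)) = (fun y => Dd ρ y k)
        from rfl, (hasFDerivAt_Dd hρ x k).fderiv]
      rfl
    simp only [Fin.sum_univ_three, Hd, Dd, hHd]
    push_cast
    ring
  have e0 : (fun y : E3 => Qform ρ W y ((0 : Fin (1+1)).removeNth v))
      = fun y : E3 => rhoC ρ y * W 0 * (v 1) 1
          + ((y 0 : ℂ) * W 1 + W 2) * ∑ k, (v 1) k * Dd ρ y k := rfl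
  have e1 : (fun y : E3 => Qform ρ W y ((1 : Fin (1+1)).removeNth v))
      = fun y : E3 => rhoC ρ y * W 0 * (v 0) 1
          + ((y 0 : ℂ) * W 1 + W 2) * ∑ k, (v 0) k * Dd ρ y k := rfl
  have sum2 : ∀ (f : Fin (1+1) → ℂ), (∑ i, f i) = f 0 + f 1 := fun f => Fin.sum_univ_two f
  simp only [extdC]
  rw [sum2]
  rw [e0, e1, Fin.sum_univ_three, Fin.sum_univ_three]
  rw [hfd, hfd, hfd, hfd, hfd, hfd]
  rw [DQform]
  simp only [Fin.sum_univ_three]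
  rw [Hsymm hρ x 0 1, Hsymm hρ x 0 2, Hsymm hρ x 1 2]
  simp [Pi.single_apply]
  ring

lemma wedge11 (α β : FormC 3 1) (x : E3) (v : Fin 2 → Fin 3 → ℂ) :
    wedgeC α β x v
      = α x (fun _ => v 0) * β x (fun _ => v 1) - α x (fun _ => v 1) * β x (fun _ => v 0) := by
  have hterm : ∀ σ : Equiv.Perm (Fin (1+1)),
      ((Equiv.Perm.sign σ : ℤ) : ℂ) *
        (α x (fun i => v (σ (Fin.castAdd 1 i))) * β x (fun j => v (σ (Fin.natAdd 1 j))))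
      = ((Equiv.Perm.sign σ : ℤ) : ℂ) * (α x (fun _ => v (σ 0)) * β x (fun _ => v (σ 1))) := by
    intro σ
    congr 2
    · congr 1
      funext i
      have : i = 0 := Fin.fin_one_eq_zero i
      subst this; rfl
    · congr 1
      funext j
      have : j = 0 := Fin.fin_one_eq_zero j
      subst this; rfl
  rw [wedgeC]
  simp only [hterm]
  rw [show (Finset.univ : Finset (Equiv.Perm (Fin (1+1))))
      = {1, Equiv.swap 0 1} from by decide]
  rw [Finset.sum_insert (by decide), Finset.sum_singleton]
  have e1 : ((1 : Equiv.Perm (Fin (1+1))) 0) = 0 := rfl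
  have e2 : ((1 : Equiv.Perm (Fin (1+1))) 1) = 1 := rfl
  have e3 : ((Equiv.swap (0 : Fin (1+1)) 1) 0) = 1 := by decide
  have e4 : ((Equiv.swap (0 : Fin (1+1)) 1) 1) = 0 := by decide
  rw [e1, e2, e3, e4]
  have s1 : ((Equiv.Perm.sign (1 : Equiv.Perm (Fin (1+1))) : ℤ) : ℂ) = 1 := by
    rw [show Equiv.Perm.sign (1 : Equiv.Perm (Fin (1+1))) = 1 from by decide]; simp
  have s2 : ((Equiv.Perm.sign (Equiv.swap (0 : Fin (1+1)) 1) : ℤ) : ℂ) = -1 := by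
    rw [show Equiv.Perm.sign (Equiv.swap (0 : Fin (1+1)) 1) = -1 from by decide]; simp
  rw [s1, s2]
  simp [Nat.factorial]
  ring

lemma wedge12 (α : FormC 3 1) (β : FormC 3 2) (x : E3) (v : Fin 3 → Fin 3 → ℂ) :
    wedgeC α β x v = (1/2 : ℂ) * (
      α x (fun _ => v 0) * β x ![v 1, v 2]
      - α x (fun _ => v 1) * β x ![v 0, v 2]
      - α x (fun _ => v 2) * β x ![v 1, v 0]
      - α x (fun _ => v 0) * β x ![v 2, v 1]
      + α x (fun _ => v 1) * β x ![v 2, v 0]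
      + α x (fun _ => v 2) * β x ![v 0, v 1]) := by
  have hterm : ∀ σ : Equiv.Perm (Fin (1+2)),
      ((Equiv.Perm.sign σ : ℤ) : ℂ) *
        (α x (fun i => v (σ (Fin.castAdd 2 i))) * β x (fun j => v (σ (Fin.natAdd 1 j))))
      = ((Equiv.Perm.sign σ : ℤ) : ℂ) *
        (α x (fun _ => v (σ 0)) * β x ![v (σ 1), v (σ 2)]) := by
    intro σ
    congr 2
    · congr 1
      funext i
      have : i = 0 := Fin.fin_one_eq_zero i
      subst this; rfl
    · congr 1
      funext j
      match j with
      | 0 => rfl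
      | 1 => rfl
  rw [wedgeC]
  simp only [hterm]
  rw [show (Finset.univ : Finset (Equiv.Perm (Fin (1+2))))
      = {1, Equiv.swap 0 1, Equiv.swap 0 2, Equiv.swap 1 2,
         Equiv.swap 0 1 * Equiv.swap 1 2, Equiv.swap 1 2 * Equiv.swap 0 1} from by decide]
  rw [Finset.sum_insert (by decide), Finset.sum_insert (by decide),
    Finset.sum_insert (by decide), Finset.sum_insert (by decide),
    Finset.sum_insert (by decide), Finset.sum_singleton]
  have sgn : ∀ σ : Equiv.Perm (Fin (1+2)), ∀ z : ℤ, Equiv.Perm.sign σ = z →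
      ((Equiv.Perm.sign σ : ℤ) : ℂ) = (z : ℂ) := by
    intro σ z h
    rw [h]
  rw [sgn 1 1 (by decide), sgn (Equiv.swap 0 1) (-1) (by decide),
    sgn (Equiv.swap 0 2) (-1) (by decide), sgn (Equiv.swap 1 2) (-1) (by decide),
    sgn (Equiv.swap 0 1 * Equiv.swap 1 2) 1 (by decide),
    sgn (Equiv.swap 1 2 * Equiv.swap 0 1) 1 (by decide)]
  have ev : ∀ (σ : Equiv.Perm (Fin (1+2))) (a b c : Fin (1+2)),
      σ 0 = a → σ 1 = b → σ 2 = c →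
      α x (fun _ => v (σ 0)) * β x ![v (σ 1), v (σ 2)]
        = α x (fun _ => v a) * β x ![v b, v c] := by
    intro σ a b c h1 h2 h3
    rw [h1, h2, h3]
  rw [ev 1 0 1 2 rfl rfl rfl,
    ev (Equiv.swap 0 1) 1 0 2 (by decide) (by decide) (by decide),
    ev (Equiv.swap 0 2) 2 1 0 (by decide) (by decide) (by decide),
    ev (Equiv.swap 1 2) 0 2 1 (by decide) (by decide) (by decide),
    ev (Equiv.swap 0 1 * Equiv.swap 1 2) 1 2 0 (by decide) (by decide) (by decide),
    ev (Equiv.swap 1 2 * Equiv.swap 0 1) 2 0 1 (by decide) (by decide) (by decide)]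
  have hfac : ((1:ℂ) / ((Nat.factorial 1 : ℂ) * (Nat.factorial 2 : ℂ))) = 1/2 := by
    norm_num [Nat.factorial]
  rw [hfac]
  push_cast
  ring

lemma extd_rho (x : E3) (u : Fin 1 → Fin 3 → ℂ) :
    extdC (fun p (_ : Fin 0 → Fin 3 → ℂ) => ((ρ p : ℝ) : ℂ)) x u
      = ∑ j, u 0 j * Dd ρ x j := by
  have sum1 : ∀ (f : Fin (0+1) → ℂ), (∑ i, f i) = f 0 := fun f => Fin.sum_univ_one f
  simp only [extdC]
  rw [sum1]
  have h : (fun y : E3 => (fun p (_ : Fin 0 → Fin 3 → ℂ) => ((ρ p : ℝ) : ℂ)) y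
      ((0 : Fin (0+1)).removeNth u)) = rhoC ρ := rfl
  rw [h]
  simp [Dd]

lemma master (hρ : ContDiff ℝ (⊤ : ℕ∞) ρ) (W : Fin 3 → ℂ) :
    wedgeC (heatC (fun p j => (ρ p : ℂ) * W j))
        (extdC (heatC (fun p j => (ρ p : ℂ) * W j)))
      = fun x v => (-(W 0 * W 1)) * (ρ x : ℂ) *
          wedgeC (extdC (fun p (_ : Fin 0 → Fin 3 → ℂ) => ((ρ p : ℝ) : ℂ)))
            (wedgeC dxC dyC) x v := by
  rw [heat_eq hρ W, dQ_eq hρ W]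
  funext x v
  rw [wedge12, wedge12]
  simp only [extd_rho, wedge11, Qform, DQform, dxC, dyC, rhoC,
    Matrix.cons_val_zero, Matrix.cons_val_one, Matrix.head_cons, Fin.sum_univ_three]
  ring

/-- For `A = x dy + dz` on ℝ³, with spinors `Sp1 = ∂_x + i ∂_y`, `Sp2 = ∂_x − i ∂_y`:
the processes `ρ·Sp1` and `ρ·Sp2` have `Q ∧ dQ = ∓ i ρ dρ ∧ dx ∧ dy` (irreversible
when `ρ dρ ∧ dx ∧ dy ≠ 0`), yet the real combinations `V_x = (Sp1 + Sp2)/2` and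
`V_y = −i(Sp1 − Sp2)/2` give processes `ρ V_x`, `ρ V_y` with `Q ∧ dQ = 0`
(reversible). -/
theorem stmt15 (ρ : (Fin 3 → ℝ) → ℝ) (hρ : ContDiff ℝ (⊤ : ℕ∞) ρ)
    (Sp1v Sp2v : Fin 3 → ℂ)
    (hSp1 : Sp1v = ![1, Complex.I, 0]) (hSp2 : Sp2v = ![1, -Complex.I, 0])
    (X1 X2 Vx Vy : (Fin 3 → ℝ) → (Fin 3 → ℂ))
    (hX1 : X1 = fun p j => (ρ p : ℂ) * Sp1v j)
    (hX2 : X2 = fun p j => (ρ p : ℂ) * Sp2v j)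
    (hVx : Vx = fun p j => (ρ p : ℂ) * ((Sp1v j + Sp2v j) / 2))
    (hVy : Vy = fun p j => (ρ p : ℂ) * (-Complex.I * (Sp1v j - Sp2v j) / 2)) :
    (wedgeC (heatC X1) (extdC (heatC X1)) = fun x v =>
      -Complex.I * (ρ x : ℂ) *
        wedgeC (extdC (fun p (_ : Fin 0 → Fin 3 → ℂ) => ((ρ p : ℝ) : ℂ)))
          (wedgeC dxC dyC) x v) ∧
    (wedgeC (heatC X2) (extdC (heatC X2)) = fun x v =>
      Complex.I * (ρ x : ℂ) *
        wedgeC (extdC (fun p (_ : Fin 0 → Fin 3 → ℂ) => ((ρ p : ℝ) : ℂ)))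
          (wedgeC dxC dyC) x v) ∧
    wedgeC (heatC Vx) (extdC (heatC Vx)) = 0 ∧
    wedgeC (heatC Vy) (extdC (heatC Vy)) = 0 := by
  subst hSp1 hSp2 hX1 hX2 hVx hVy
  refine ⟨?_, ?_, ?_, ?_⟩
  · rw [master hρ ![1, Complex.I, 0]]
    funext x v
    simp only [Matrix.cons_val_zero, Matrix.cons_val_one, Matrix.head_cons]
    ring
  · rw [master hρ ![1, -Complex.I, 0]]
    funext x v
    simp only [Matrix.cons_val_zero, Matrix.cons_val_one, Matrix.head_cons]
    ring
  · have h : (fun p j => (ρ p : ℂ) * ((![1, Complex.I, 0] j + ![1, -Complex.I, 0] j) / 2))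
        = fun p j => (ρ p : ℂ) * (![1, 0, 0] : Fin 3 → ℂ) j := by
      funext p j
      fin_cases j <;>
        simp [Matrix.cons_val_zero, Matrix.cons_val_one, Matrix.head_cons] <;> ring
    rw [h, master hρ ![1, 0, 0]]
    funext x v
    simp
  · have h : (fun p j => (ρ p : ℂ) * (-Complex.I * (![1, Complex.I, 0] j - ![1, -Complex.I, 0] j) / 2))
        = fun p j => (ρ p : ℂ) * (![0, 1, 0] : Fin 3 → ℂ) j := by
      funext p j
      fin_cases j <;>
        simp [Matrix.cons_val_zero, Matrix.cons_val_one, Matrix.head_cons] <;>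
        ring_nf <;> simp [Complex.I_sq] <;> ring
    rw [h, master hρ ![0, 1, 0]]
    funext x v
    simp
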